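/- Let β : ℝ → ℝ be real-analytic on an open interval containing 0 with β(0) = 0 and β'(0) = 0, and let C ∈ ℝ. Define F(r) = ∫₀^r (e^{2β(s)} - 1)/s² ds and κ(r) = -log(1 - r·F(r) - r·C) + β(r). Then for every r in a neighbourhood of 0 on which 1 - s·F(s) - s·C > 0 for all s between 0 and r, one has ∫₀^r e^{2κ(s)} ds = r·e^{κ(r) - β(r)}. -/

import Mathlib

/-!
Since `β(0) = β'(0) = 0`, the analytic function `e^{2β(s)} - 1` factors as `s² h(s)` with `h`
analytic at `0`, so `F = ∫₀ h` is differentiable near `0` with `F' = h`. With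
`G(s) = 1 - s F(s) - s C` one has `e^{2κ} = e^{2β} / G²` and
`(s / G)' = (G - s G') / G² = (1 + s² h) / G² = e^{2β} / G²`, so the fundamental theorem of
calculus gives `∫₀^r e^{2κ} = r / G(r) = r e^{κ(r) - β(r)}`.
-/

open Filter Topology Set MeasureTheory intervalIntegral

theorem Filter.Eventually.forall_uIcc {α : Type*} [LinearOrder α] [TopologicalSpace α]
    [OrderTopology α] {p : α → Prop} {a : α} (h : ∀ᶠ x in 𝓝 a, p x) :
    ∀ᶠ r in 𝓝 a, ∀ x ∈ uIcc a r, p x :=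
  (tendsto_const_nhds.uIcc tendsto_id).eventually h.smallSets

theorem AnalyticAt.exists_eq_sub_sq_smul {𝕜 E : Type*} [NontriviallyNormedField 𝕜]
    [NormedAddCommGroup E] [NormedSpace 𝕜 E] {f : 𝕜 → E} {z : 𝕜} (hf : AnalyticAt 𝕜 f z)
    (hf₀ : f z = 0) (hf₁ : deriv f z = 0) :
    ∃ g : 𝕜 → E, AnalyticAt 𝕜 g z ∧ ∀ s, f s = (s - z) ^ 2 • g s := by
  obtain ⟨p, hp⟩ := hf
  refine ⟨_, (hp.has_fpower_series_iterate_dslope_fslope 2).analyticAt,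
    fun s ↦ (pow_sub_smul_iterate_dslope_of_zero 2 (fun k hk ↦ ?_) s).symm⟩
  interval_cases k
  · simpa using hf₀
  · simpa [dslope_same] using hf₁

theorem exists_exp_two_mul_sub_one_eq_sub_sq_mul {β : ℝ → ℝ} {z : ℝ} (hβ : AnalyticAt ℝ β z)
    (hβ₀ : β z = 0) (hβ₁ : deriv β z = 0) :
    ∃ h : ℝ → ℝ, AnalyticAt ℝ h z ∧ ∀ s, Real.exp (2 * β s) - 1 = (s - z) ^ 2 * h s := by
  have hderiv : HasDerivAt (fun s ↦ Real.exp (2 * β s) - 1) 0 z := by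
    simpa [hβ₀, hβ₁] using ((hβ.differentiableAt.hasDerivAt.const_mul 2).exp).sub_const 1
  simpa using (((analyticAt_const.mul hβ).rexp).sub analyticAt_const).exists_eq_sub_sq_smul
    (by simp [hβ₀]) hderiv.deriv

theorem eventually_hasDerivAt_integral {E : Type*} [NormedAddCommGroup E] [NormedSpace ℝ E]
    [CompleteSpace E] {f : ℝ → E} {a : ℝ} (hf : ∀ᶠ x in 𝓝 a, ContinuousAt f x) :
    ∀ᶠ t in 𝓝 a, HasDerivAt (fun u ↦ ∫ x in a..u, f x) (f t) t := by
  filter_upwards [hf.forall_uIcc, hf.eventually_nhds] with t hcont hnhds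
  obtain ⟨U, hUcont, hUopen, htU⟩ := mem_nhds_iff.1 hnhds
  exact integral_hasDerivAt_right
    (ContinuousOn.intervalIntegrable fun x hx ↦ (hcont x hx).continuousWithinAt)
    (ContinuousAt.stronglyMeasurableAtFilter hUopen hUcont t htU) (hcont t right_mem_uIcc)

theorem integral_one_add_sq_mul_div_sq {F h : ℝ → ℝ} {C a r : ℝ}
    (hF : ∀ s ∈ uIcc a r, HasDerivAt F (h s) s) (hh : ContinuousOn h (uIcc a r))
    (hG : ∀ s ∈ uIcc a r, 1 - s * F s - s * C ≠ 0) :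
    ∫ s in a..r, (1 + s ^ 2 * h s) / (1 - s * F s - s * C) ^ 2
      = r / (1 - r * F r - r * C) - a / (1 - a * F a - a * C) := by
  have hderiv : ∀ s ∈ uIcc a r, HasDerivAt (fun t ↦ t / (1 - t * F t - t * C))
      ((1 + s ^ 2 * h s) / (1 - s * F s - s * C) ^ 2) s := by
    intro s hs
    have hG' : HasDerivAt (fun t ↦ 1 - t * F t - t * C) (-(F s + s * h s + C)) s :=
      (((hasDerivAt_const s 1).fun_sub ((hasDerivAt_id' s).fun_mul (hF s hs))).fun_sub
        ((hasDerivAt_id' s).mul_const C)).congr_deriv (by ring)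
    exact ((hasDerivAt_id' s).fun_div hG' (hG s hs)).congr_deriv (by ring)
  have hFcont : ContinuousOn F (uIcc a r) := fun s hs ↦ (hF s hs).continuousAt.continuousWithinAt
  refine integral_eq_sub_of_hasDerivAt hderiv (ContinuousOn.intervalIntegrable ?_)
  exact (continuousOn_const.add ((continuous_pow 2).continuousOn.mul hh)).div
    (((continuousOn_const.sub (continuousOn_id.mul hFcont)).sub
      (continuousOn_id.mul continuousOn_const)).pow 2)
    fun s hs ↦ pow_ne_zero 2 (hG s hs)

theorem Real.exp_two_mul_neg_log_add {g : ℝ} (hg : 0 < g) (x : ℝ) :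
    Real.exp (2 * (-Real.log g + x)) = Real.exp (2 * x) / g ^ 2 := by
  rw [show 2 * (-Real.log g + x) = 2 * x - (2 : ℕ) * Real.log g by push_cast; ring, Real.exp_sub,
    ← Real.log_pow, Real.exp_log (pow_pos hg 2)]

/-- For `β` real-analytic near `0` with `β(0) = β'(0) = 0`,
`F(r) = ∫₀^r (e^{2β(s)}-1)/s² ds` and `κ(r) = -log(1 - r·F(r) - r·C) + β(r)`, one has
`∫₀^r e^{2κ(s)} ds = r·e^{κ(r)-β(r)}` for every `r` near `0` such that
`1 - s·F(s) - s·C > 0` for all `s` between `0` and `r`. -/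
theorem stmt_7 (a b : ℝ) (ha : a < 0) (hb : 0 < b)
    (β : ℝ → ℝ) (hβ : AnalyticOnNhd ℝ β (Set.Ioo a b))
    (hβ0 : β 0 = 0) (hβ'0 : deriv β 0 = 0) (C : ℝ)
    (F : ℝ → ℝ) (hF : ∀ r : ℝ, F r = ∫ s in (0:ℝ)..r, (Real.exp (2 * β s) - 1) / s ^ 2)
    (κ : ℝ → ℝ) (hκ : ∀ r : ℝ, κ r = -Real.log (1 - r * F r - r * C) + β r) :
    ∀ᶠ r in nhds (0:ℝ), (∀ s ∈ Set.uIcc (0:ℝ) r, 0 < 1 - s * F s - s * C) →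
      ∫ s in (0:ℝ)..r, Real.exp (2 * κ s) = r * Real.exp (κ r - β r) := by
  obtain ⟨h, hh, hsq⟩ : ∃ h : ℝ → ℝ, AnalyticAt ℝ h 0 ∧
      ∀ s, Real.exp (2 * β s) - 1 = s ^ 2 * h s := by
    simpa using exists_exp_two_mul_sub_one_eq_sub_sq_mul (hβ 0 ⟨ha, hb⟩) hβ0 hβ'0
  have hFh : F = fun r ↦ ∫ s in (0:ℝ)..r, h s := by
    funext r
    rw [hF r]
    refine integral_congr_ae ?_
    filter_upwards [Measure.ae_ne volume 0] with s hs _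
    rw [hsq s, mul_div_cancel_left₀ _ (pow_ne_zero 2 hs)]
  have hcont : ∀ᶠ s in 𝓝 0, ContinuousAt h s :=
    hh.eventually_analyticAt.mono fun _ hs ↦ hs.continuousAt
  filter_upwards [(hcont.and (hFh ▸ eventually_hasDerivAt_integral hcont)).forall_uIcc]
    with r hr hG
  have hexp : EqOn (fun s ↦ Real.exp (2 * κ s))
      (fun s ↦ (1 + s ^ 2 * h s) / (1 - s * F s - s * C) ^ 2) (uIcc 0 r) := by
    intro s hs
    dsimp only
    rw [hκ s, Real.exp_two_mul_neg_log_add (hG s hs), ← hsq s, add_sub_cancel]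
  rw [integral_congr hexp, integral_one_add_sq_mul_div_sq (fun s hs ↦ (hr s hs).2)
    (fun s hs ↦ (hr s hs).1.continuousWithinAt) fun s hs ↦ (hG s hs).ne', hκ r,
    add_sub_cancel_right, Real.exp_neg, Real.exp_log (hG r right_mem_uIcc)]
  simp [div_eq_mul_inv]
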